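/- Let J ≥ 1. For every x = (x_1,…,x_J) ∈ (ℝ^d)^J, every θ, θ0 ∈ ℝ^d and all functions h, h0 : (ℝ^d)^J → ℝ, the difference-in-differences bound |gᴶ₊(θ,h)(x) − gᴶ₊(θ0,h)(x) − gᴶ₊(θ,h0)(x) + gᴶ₊(θ0,h0)(x)| ≤ 2·max_{1≤j≤J} |⟪x_j, θ − θ0⟫| holds. -/
import Mathlib


open scoped RealInnerProductSpace

/-- The "positive part" multi-index ReLU-based maximum score function
`gᴶ₊(θ,h)(x) = max(h(x) − min_j max(−⟪x_j,θ⟫,0), 0)`. -/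
noncomputable def gJplus {d J : ℕ} (θ : EuclideanSpace ℝ (Fin d))
    (h : (Fin J → EuclideanSpace ℝ (Fin d)) → ℝ)
    (x : Fin J → EuclideanSpace ℝ (Fin d)) : ℝ :=
  max (h x - ⨅ j : Fin J, max (-⟪x j, θ⟫) 0) 0

/-- The "negative part" multi-index ReLU-based maximum score function
`gᴶ₋(θ,h)(x) = max(−h(x) − min_j max(⟪x_j,θ⟫,0), 0)`. -/
noncomputable def gJminus {d J : ℕ} (θ : EuclideanSpace ℝ (Fin d))
    (h : (Fin J → EuclideanSpace ℝ (Fin d)) → ℝ)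
    (x : Fin J → EuclideanSpace ℝ (Fin d)) : ℝ :=
  max (-h x - ⨅ j : Fin J, max ⟪x j, θ⟫ 0) 0

/-- The multi-index ReLU-based maximum score function `gᴶ = gᴶ₊ + gᴶ₋`. -/
noncomputable def gJ {d J : ℕ} (θ : EuclideanSpace ℝ (Fin d))
    (h : (Fin J → EuclideanSpace ℝ (Fin d)) → ℝ)
    (x : Fin J → EuclideanSpace ℝ (Fin d)) : ℝ :=
  gJplus θ h x + gJminus θ h x

/-- `h0` satisfies the weak multi-index single-crossing (MISC) condition at
`x = (x_1,…,x_J)` with respect to `θ0`. -/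
def WeakMISC {d J : ℕ} (θ0 : EuclideanSpace ℝ (Fin d))
    (h0 : (Fin J → EuclideanSpace ℝ (Fin d)) → ℝ)
    (x : Fin J → EuclideanSpace ℝ (Fin d)) : Prop :=
  ((∀ j, 0 < ⟪x j, θ0⟫) → 0 ≤ h0 x) ∧ ((∀ j, ⟪x j, θ0⟫ < 0) → h0 x ≤ 0)

/-- multi-index difference-in-differences bound
`|gᴶ₊(θ,h)(x) − gᴶ₊(θ0,h)(x) − gᴶ₊(θ,h0)(x) + gᴶ₊(θ0,h0)(x)| ≤ 2·max_j |⟪x_j, θ − θ0⟫|`. -/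
theorem gJplus_did_bound {d J : ℕ} (hJ : 1 ≤ J)
    (x : Fin J → EuclideanSpace ℝ (Fin d)) (θ θ0 : EuclideanSpace ℝ (Fin d))
    (h h0 : (Fin J → EuclideanSpace ℝ (Fin d)) → ℝ) :
    |gJplus θ h x - gJplus θ0 h x - gJplus θ h0 x + gJplus θ0 h0 x|
      ≤ 2 * ⨆ j : Fin J, |⟪x j, θ - θ0⟫| := by
  haveI : Nonempty (Fin J) := Fin.pos_iff_nonempty.mp hJ
  set f : Fin J → ℝ := fun j => max (-⟪x j, θ⟫) 0 with hf
  set g : Fin J → ℝ := fun j => max (-⟪x j, θ0⟫) 0 with hg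
  set M : ℝ := ⨆ j : Fin J, |⟪x j, θ - θ0⟫| with hM
  have hbddf : BddBelow (Set.range f) := (Set.finite_range f).bddBelow
  have hbddg : BddBelow (Set.range g) := (Set.finite_range g).bddBelow
  have hbddM : BddAbove (Set.range fun j : Fin J => |⟪x j, θ - θ0⟫|) :=
    (Set.finite_range _).bddAbove
  have hfg : ∀ j, |f j - g j| ≤ M := by
    intro j
    have h1 : |f j - g j| ≤ max |(-⟪x j, θ⟫) - (-⟪x j, θ0⟫)| |(0:ℝ) - 0| :=
      abs_max_sub_max_le_max _ _ _ _
    have h2 : |(-⟪x j, θ⟫) - (-⟪x j, θ0⟫)| = |⟪x j, θ - θ0⟫| := by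
      rw [inner_sub_right]
      rw [show (-⟪x j, θ⟫) - (-⟪x j, θ0⟫) = -(⟪x j, θ⟫ - ⟪x j, θ0⟫) by ring, abs_neg]
    have h3 : |⟪x j, θ - θ0⟫| ≤ M := le_ciSup hbddM j
    have h4 : |(0:ℝ) - 0| = 0 := by simp
    calc |f j - g j| ≤ max |(-⟪x j, θ⟫) - (-⟪x j, θ0⟫)| |(0:ℝ) - 0| := h1
      _ ≤ M := by
          rw [h2, h4]
          exact max_le h3 ((abs_nonneg _).trans h3)
  have hm : |(⨅ j, f j) - ⨅ j, g j| ≤ M := by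
    rw [abs_sub_le_iff]
    have ha : (⨅ j, f j) - M ≤ ⨅ j, g j := by
      refine le_ciInf (fun j => ?_)
      have := abs_le.mp (hfg j)
      have h5 : ⨅ j, f j ≤ f j := ciInf_le hbddf j
      linarith
    have hb : (⨅ j, g j) - M ≤ ⨅ j, f j := by
      refine le_ciInf (fun j => ?_)
      have := abs_le.mp (hfg j)
      have h5 : ⨅ j, g j ≤ g j := ciInf_le hbddg j
      linarith
    constructor <;> linarith
  have key : ∀ a : ℝ, |max (a - ⨅ j, f j) 0 - max (a - ⨅ j, g j) 0| ≤ M := by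
    intro a
    have h1 : |max (a - ⨅ j, f j) 0 - max (a - ⨅ j, g j) 0| ≤
        max |(a - ⨅ j, f j) - (a - ⨅ j, g j)| |(0:ℝ) - 0| :=
      abs_max_sub_max_le_max _ _ _ _
    have h2 : |(a - ⨅ j, f j) - (a - ⨅ j, g j)| = |(⨅ j, g j) - ⨅ j, f j| := by
      ring_nf
    have h3 : |(⨅ j, g j) - ⨅ j, f j| ≤ M := by rwa [abs_sub_comm]
    have h4 : |(0:ℝ) - 0| = 0 := by simp
    calc _ ≤ max |(a - ⨅ j, f j) - (a - ⨅ j, g j)| |(0:ℝ) - 0| := h1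
      _ ≤ M := by
          rw [h2, h4]
          exact max_le h3 ((abs_nonneg _).trans h3)
  have e1 := key (h x)
  have e2 := key (h0 x)
  simp only [gJplus, ← hf, ← hg]
  calc |max (h x - ⨅ j, f j) 0 - max (h x - ⨅ j, g j) 0 -
        max (h0 x - ⨅ j, f j) 0 + max (h0 x - ⨅ j, g j) 0|
      ≤ |max (h x - ⨅ j, f j) 0 - max (h x - ⨅ j, g j) 0| +
        |max (h0 x - ⨅ j, f j) 0 - max (h0 x - ⨅ j, g j) 0| := by
        rw [show max (h x - ⨅ j, f j) 0 - max (h x - ⨅ j, g j) 0 -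
              max (h0 x - ⨅ j, f j) 0 + max (h0 x - ⨅ j, g j) 0 =
            (max (h x - ⨅ j, f j) 0 - max (h x - ⨅ j, g j) 0) -
              (max (h0 x - ⨅ j, f j) 0 - max (h0 x - ⨅ j, g j) 0) by ring]
        exact abs_sub _ _
    _ ≤ M + M := add_le_add e1 e2
    _ = 2 * M := by ring
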